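/- arXiv:2603.24330 — 11 statements merged into one kernel-verified Lean document; each statement's English description precedes it below -/
import Mathlib

section
/- For every integer n ≥ 1, writing M = 2n+1 and N = 2n, the coefficient of the monomial f_j·f_{M−j} in B_n equals 2·(−1)^j·N!·(M−2j)·(M−j)!·j! for every 0 ≤ j ≤ M (where M−2j is interpreted as an integer, possibly negative). -/
open MvPolynomial Finset

/-- `alph n i = (2n+1-i)! * i!` -/
def alph (n i : ℕ) : ℕ := (2*n+1-i).factorial * i.factorial

/-- `bet n i = (2n-i)! * (i+1)!` -/
def bet (n i : ℕ) : ℕ := (2*n-i).factorial * (i+1).factorial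

/-- The coefficient `A_n` of `x^2` in the quadratic covariant `Q_n = (F,F)_{2n}`. -/
noncomputable def An (n : ℕ) : MvPolynomial ℕ ℤ :=
  ∑ i ∈ Finset.range (2*n+1),
    MvPolynomial.C ((-1 : ℤ)^i * ((2*n).choose i : ℤ) * (alph n i : ℤ) * (bet n i : ℤ)) *
      X i * X (2*n - i)

/-- The coefficient `B_n` of `xz` in the quadratic covariant `Q_n = (F,F)_{2n}`. -/
noncomputable def Bn (n : ℕ) : MvPolynomial ℕ ℤ :=
  ∑ i ∈ Finset.range (2*n+1),
    MvPolynomial.C ((-1 : ℤ)^i * ((2*n).choose i : ℤ)) *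
      (MvPolynomial.C ((alph n i : ℤ)^2) * X i * X (2*n+1-i) +
       MvPolynomial.C ((bet n i : ℤ)^2) * X (i+1) * X (2*n-i))

/-- The coefficient `C_n` of `z^2` in the quadratic covariant `Q_n = (F,F)_{2n}`. -/
noncomputable def Cpoly (n : ℕ) : MvPolynomial ℕ ℤ :=
  ∑ i ∈ Finset.range (2*n+1),
    MvPolynomial.C ((-1 : ℤ)^i * ((2*n).choose i : ℤ) * (alph n i : ℤ) * (bet n i : ℤ)) *
      X (i+1) * X (2*n+1-i)

/-- The discriminant `Δ_n = B_n² − 4 A_n C_n` of the quadratic covariant. -/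
noncomputable def Δn (n : ℕ) : MvPolynomial ℕ ℤ := Bn n ^ 2 - 4 * An n * Cpoly n

/-- `S(n)`: the content of `Δ_n`, i.e. the gcd of all its integer coefficients. -/
noncomputable def Sn (n : ℕ) : ℤ :=
  (Δn n).support.gcd (fun m => MvPolynomial.coeff m (Δn n))

/-!
Since `binom(N,i)·α_i² = N!·(M-i)·(M-i)!·i!` and `binom(N,i)·β_i² = N!·(i+1)·(N-i)!·(i+1)!`,
both halves of `B_n` are multiples of the weight `w_k = N!·(M-k)!·k!`, which is symmetric under
`k ↦ M-k`. Shifting the index of the second half gives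
`B_n = ∑_{k=0}^{M} (-1)^k (M-2k) w_k f_k f_{M-k}`, the boundary terms vanishing through the factors
`M-k` and `k`. As `M` is odd, `f_j f_{M-j}` comes from exactly two summands, `k = j` and
`k = M-j`, and these contribute equally.
-/
lemma C_mul_X_mul_X {σ R : Type*} [CommSemiring R] (c : R) (a b : σ) :
    (C c * X a * X b : MvPolynomial σ R) = monomial (Finsupp.single a 1 + Finsupp.single b 1) c := by
  rw [X, X, C_mul_monomial, monomial_mul, mul_one, mul_one]

lemma single_add_single_sub_eq_iff {M i j : ℕ} (hi : i ≤ M) (hj : j ≤ M) :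
    Finsupp.single i 1 + Finsupp.single (M - i) 1 = Finsupp.single j 1 + Finsupp.single (M - j) 1 ↔
      i = j ∨ i = M - j := by
  rw [Finsupp.single_add_single_eq_single_add_single one_ne_zero one_ne_zero]
  omega

lemma coeff_sum_C_mul_X_mul_X_sub {R : Type*} [CommSemiring R] (c : ℕ → R) {M j : ℕ}
    (hj : j ≤ M) (hM : 2 * j ≠ M) :
    coeff (Finsupp.single j 1 + Finsupp.single (M - j) 1)
        (∑ k ∈ range (M + 1), C (c k) * X k * X (M - k)) = c j + c (M - j) := by
  classical
  simp only [coeff_sum, C_mul_X_mul_X, coeff_monomial]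
  have hsymm : Finsupp.single (M - j) 1 + Finsupp.single (M - (M - j)) 1 =
      Finsupp.single j 1 + Finsupp.single (M - j) (1 : ℕ) := by
    rw [Nat.sub_sub_self hj, add_comm]
  rw [Finset.sum_eq_add_of_mem j (M - j) (by simp; omega) (by simp) (by omega), if_pos rfl,
    if_pos hsymm]
  intro k hk hkj
  rw [if_neg]
  rwa [single_add_single_sub_eq_iff (by simp at hk; omega) hj, not_or]

lemma neg_one_pow_sub_of_odd {R : Type*} [CommRing R] {M j : ℕ} (hM : Odd M) (hj : j ≤ M) :
    (-1 : R) ^ (M - j) = -(-1) ^ j := by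
  have hprod : (-1 : R) ^ (M - j) * (-1) ^ j = -1 := by
    rw [← pow_add, Nat.sub_add_cancel hj, hM.neg_one_pow]
  have hsq : ((-1 : R) ^ j) ^ 2 = 1 := by rw [← pow_mul, mul_comm, pow_mul, neg_one_sq, one_pow]
  linear_combination (-1 : R) ^ j * hprod - (-1 : R) ^ (M - j) * hsq

def factorialWeight (n k : ℕ) : ℕ := (2*n).factorial * (2*n+1-k).factorial * k.factorial

lemma factorialWeight_sub {n k : ℕ} (hk : k ≤ 2*n+1) :
    factorialWeight n (2*n+1-k) = factorialWeight n k := by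
  rw [factorialWeight, factorialWeight, Nat.sub_sub_self hk, mul_assoc, mul_assoc, mul_comm k.factorial]

lemma choose_mul_alph_sq (n i : ℕ) :
    (2*n).choose i * alph n i ^ 2 = (2*n+1-i) * factorialWeight n i := by
  rcases le_or_gt i (2*n) with hi | hi
  · have hfac : (2*n+1-i).factorial = (2*n+1-i) * (2*n-i).factorial := by
      rw [show 2*n+1-i = 2*n-i+1 by omega, Nat.factorial_succ]
    rw [alph, factorialWeight, ← Nat.choose_mul_factorial_mul_factorial hi, hfac]
    ring
  · rw [Nat.choose_eq_zero_of_lt hi, show 2*n+1-i = 0 by omega, zero_mul, zero_mul]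

lemma choose_mul_bet_sq {n i : ℕ} (hi : i ≤ 2*n) :
    (2*n).choose i * bet n i ^ 2 = (i+1) * factorialWeight n (i+1) := by
  rw [bet, factorialWeight, show 2*n+1-(i+1) = 2*n-i by omega, Nat.factorial_succ i,
    ← Nat.choose_mul_factorial_mul_factorial hi]
  ring

lemma Bn_eq_sum (n : ℕ) :
    Bn n = ∑ k ∈ range (2*n+2),
      C ((-1)^k * ((2*n+1 : ℤ) - 2*k) * factorialWeight n k) * X k * X (2*n+1-k) := by
  set P : ℕ → MvPolynomial ℕ ℤ := fun k =>
    C ((-1)^k * ((2*n+1 : ℤ) - k) * factorialWeight n k) * X k * X (2*n+1-k)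
  set Q : ℕ → MvPolynomial ℕ ℤ := fun k =>
    C (-(-1)^k * (k : ℤ) * factorialWeight n k) * X k * X (2*n+1-k)
  calc Bn n = ∑ i ∈ range (2*n+1), (P i + Q (i+1)) := by
        refine sum_congr rfl fun i hi => ?_
        have hi : i ≤ 2*n := by simp at hi; omega
        have hα : (-1)^i * ((2*n).choose i : ℤ) * (alph n i : ℤ)^2 =
            (-1)^i * ((2*n+1 : ℤ) - i) * factorialWeight n i := by
          rw [mul_assoc, ← Nat.cast_pow, ← Nat.cast_mul, choose_mul_alph_sq]
          push_cast [show i ≤ 2*n+1 by omega]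
          ring
        have hβ : (-1)^i * ((2*n).choose i : ℤ) * (bet n i : ℤ)^2 =
            -(-1)^(i+1) * ((i+1 : ℕ) : ℤ) * factorialWeight n (i+1) := by
          rw [mul_assoc, ← Nat.cast_pow, ← Nat.cast_mul, choose_mul_bet_sq hi]
          push_cast
          ring
        calc _ = C ((-1)^i * ((2*n).choose i : ℤ) * (alph n i : ℤ)^2) * X i * X (2*n+1-i) +
              C ((-1)^i * ((2*n).choose i : ℤ) * (bet n i : ℤ)^2) * X (i+1) * X (2*n+1-(i+1)) := by
              rw [show 2*n+1-(i+1) = 2*n-i by omega]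
              simp only [map_mul]
              ring
          _ = P i + Q (i+1) := by rw [hα, hβ]
    _ = ∑ k ∈ range (2*n+2), P k + ∑ k ∈ range (2*n+2), Q k := by
        have hP : P (2*n+1) = 0 := by simp [P]
        have hQ : Q 0 = 0 := by simp [Q]
        rw [sum_add_distrib, sum_range_succ P (2*n+1), sum_range_succ' Q, hP, hQ, add_zero, add_zero]
    _ = _ := by
        rw [← sum_add_distrib]
        refine sum_congr rfl fun k _ => ?_
        simp only [P, Q, ← add_mul, ← C_add]
        congr 3
        ring

theorem stmt1_general (n : ℕ) (j : ℕ) (hj : j ≤ 2*n+1) :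
    MvPolynomial.coeff (Finsupp.single j 1 + Finsupp.single (2*n+1-j) 1) (Bn n) =
      2 * (-1 : ℤ)^j * ((2*n).factorial : ℤ) * ((2*n+1 : ℤ) - 2*(j : ℤ)) *
        ((2*n+1-j).factorial : ℤ) * (j.factorial : ℤ) := by
  rw [Bn_eq_sum, coeff_sum_C_mul_X_mul_X_sub _ hj (by omega), factorialWeight_sub hj,
    neg_one_pow_sub_of_odd (odd_two_mul_add_one n) hj]
  push_cast [factorialWeight, Nat.cast_sub hj]
  ring

theorem stmt1 (n : ℕ) (hn : 1 ≤ n) (j : ℕ) (hj : j ≤ 2*n+1) :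
    MvPolynomial.coeff (Finsupp.single j 1 + Finsupp.single (2*n+1-j) 1) (Bn n) =
      2 * (-1 : ℤ)^j * ((2*n).factorial : ℤ) * ((2*n+1 : ℤ) - 2*(j : ℤ)) *
        ((2*n+1-j).factorial : ℤ) * (j.factorial : ℤ) :=
  stmt1_general n j hj
end

section
/- For every integer n ≥ 1 and every integer r with 2 ≤ r ≤ n+1, setting a = n+1−r and b = n−1+r and N = 2n, the coefficient C_{n,r} of the monomial f_a·f_{a+1}·f_b·f_{b+1} in Δ_n equals −8·(N!)²·(n+r)!·(n+r−1)!·(n−r+2)!·(n−r+1)!·(2n²+4n+2r²−4r+3). -/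
open MvPolynomial Finset

/-!
Each of `A_n`, `B_n`, `C_n` is a sum of terms `c · f_u f_v` with `u + v` fixed: `2n` for `A_n`,
`2n + 2` for `C_n`, and `2n + 1` for `B_n` once its two sums are merged into one with coefficient
`covB n k`. The coefficient of the squarefree monomial `f_a f_{a+1} f_b f_{b+1}` in a product
`P * Q` of such forms is a sum over the ways of letting `P` take two of the four indices and `Q`
the other two. As `a + b = 2n`, the only splitting that fits `B_n * B_n` is `{a, b+1} | {a+1, b}`
and the only one that fits `A_n * C_n` is `{a, b} | {a+1, b+1}`. Using the symmetries
`k ↦ 2n + 1 - k` of `covB` and `i ↦ 2n - i` of `covA`, this gives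
`C_{n,r} = 8 covB(a) covB(a+1) - 16 covA(a)²`, and the closed forms of the coefficients finish.
-/

open scoped Nat

namespace MvPolynomial

variable {σ ι R : Type*} [DecidableEq σ] [CommSemiring R]

lemma coeff_sum_single_X_mul (T : Finset σ) (k : σ) (p : MvPolynomial σ R) :
    coeff (∑ i ∈ T, Finsupp.single i 1) (X k * p) =
      if k ∈ T then coeff (∑ i ∈ T.erase k, Finsupp.single i 1) p else 0 := by
  rw [coeff_X_mul']
  by_cases hk : k ∈ T
  · rw [← Finset.add_sum_erase T _ hk, add_tsub_cancel_left, if_pos hk, if_pos]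
    simp [Finsupp.single_apply]
  · rw [if_neg hk, if_neg]
    simp [Finsupp.single_apply, hk]

noncomputable def quadForm (I : Finset ι) (c : ι → R) (f g : ι → σ) : MvPolynomial σ R :=
  ∑ i ∈ I, C (c i) * X (f i) * X (g i)

lemma coeff_sum_single_quadForm_mul (T : Finset σ) (I : Finset ι) (c : ι → R) (f g : ι → σ)
    (q : MvPolynomial σ R) :
    coeff (∑ i ∈ T, Finsupp.single i 1) (quadForm I c f g * q) =
      ∑ i ∈ I with f i ∈ T ∧ g i ∈ T ∧ f i ≠ g i,
        c i * coeff (∑ j ∈ T \ {f i, g i}, Finsupp.single j 1) q := by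
  simp_rw [quadForm, Finset.sum_mul, coeff_sum, Finset.sum_filter, mul_assoc, coeff_C_mul,
    coeff_sum_single_X_mul, Finset.sdiff_insert, Finset.sdiff_singleton_eq_erase,
    Finset.erase_right_comm (s := T), Finset.mem_erase]
  refine Finset.sum_congr rfl fun i _ => ?_
  split_ifs <;> simp_all [eq_comm]

end MvPolynomial

lemma cast_choose_mul_factorial_mul_factorial {N i : ℕ} (hi : i ≤ N) :
    (N.choose i : ℤ) * i ! * (N - i)! = N ! := by
  exact_mod_cast Nat.choose_mul_factorial_mul_factorial hi

lemma cast_factorial_add_one_sub {N i : ℕ} (hi : i ≤ N) :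
    ((N + 1 - i)! : ℤ) = (N + 1 - i : ℤ) * (N - i)! := by
  rw [show N + 1 - i = (N - i) + 1 by omega, Nat.factorial_succ]
  push_cast [hi]
  ring

lemma cast_factorial_succ (i : ℕ) : ((i + 1)! : ℤ) = (i + 1) * i ! := by
  push_cast [Nat.factorial_succ]
  ring

lemma neg_one_pow_sub_eq {m k : ℕ} (h : k ≤ m) :
    (-1 : ℤ) ^ (m - k) = (-1) ^ m * (-1) ^ k := by
  obtain ⟨j, rfl⟩ := Nat.exists_eq_add_of_le h
  rw [Nat.add_sub_cancel_left, pow_add]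
  have hk : (-1 : ℤ) ^ (2 * k) = 1 := Even.neg_one_pow (even_two_mul k)
  linear_combination (-(-1 : ℤ) ^ j) * hk

section Covariant

variable (n : ℕ)

def covA (i : ℕ) : ℤ := (-1) ^ i * ((2 * n).choose i : ℤ) * alph n i * bet n i

def covB (k : ℕ) : ℤ := (-1) ^ k * (2 * n)! * (2 * n + 1 - 2 * k : ℤ) * (2 * n + 1 - k)! * k !

lemma covA_eq {i : ℕ} (hi : i ≤ 2 * n) :
    covA n i = (-1) ^ i * (2 * n)! * (2 * n + 1 - i)! * (i + 1)! := by
  have h := cast_choose_mul_factorial_mul_factorial hi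
  simp only [covA, alph, bet]
  push_cast
  rw [cast_factorial_add_one_sub hi, cast_factorial_succ]
  push_cast
  linear_combination (-1) ^ i * (2 * n + 1 - i : ℤ) * (2 * n - i)! * (i + 1) * i ! * h

lemma neg_one_pow_mul_choose_mul_alph_sq {i : ℕ} (hi : i ≤ 2 * n) :
    (-1) ^ i * ((2 * n).choose i : ℤ) * (alph n i : ℤ) ^ 2 =
      (-1) ^ i * (2 * n)! * (2 * n + 1 - i : ℤ) * (2 * n + 1 - i)! * i ! := by
  have h := cast_choose_mul_factorial_mul_factorial hi
  simp only [alph]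
  push_cast
  rw [cast_factorial_add_one_sub hi]
  push_cast
  linear_combination (-1) ^ i * (2 * n + 1 - i : ℤ) ^ 2 * (2 * n - i)! * i ! * h

lemma neg_one_pow_mul_choose_mul_bet_sq {i : ℕ} (hi : i ≤ 2 * n) :
    (-1) ^ i * ((2 * n).choose i : ℤ) * (bet n i : ℤ) ^ 2 =
      (-1) ^ i * (2 * n)! * (i + 1 : ℤ) * (2 * n - i)! * (i + 1)! := by
  have h := cast_choose_mul_factorial_mul_factorial hi
  simp only [bet]
  push_cast
  rw [cast_factorial_succ]
  linear_combination (-1) ^ i * (i + 1 : ℤ) ^ 2 * (2 * n - i)! * i ! * h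

lemma covA_two_mul_sub {i : ℕ} (hi : i ≤ 2 * n) : covA n (2 * n - i) = covA n i := by
  rw [covA_eq n (by omega), covA_eq n hi, neg_one_pow_sub_eq hi,
    Even.neg_one_pow (even_two_mul n), show 2 * n + 1 - (2 * n - i) = i + 1 by omega,
    show 2 * n - i + 1 = 2 * n + 1 - i by omega]
  ring

lemma covB_two_mul_add_one_sub {k : ℕ} (hk : k ≤ 2 * n + 1) :
    covB n (2 * n + 1 - k) = covB n k := by
  simp only [covB]
  rw [neg_one_pow_sub_eq hk, pow_succ, Even.neg_one_pow (even_two_mul n),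
    show 2 * n + 1 - (2 * n + 1 - k) = k by omega]
  push_cast [hk]
  ring

lemma An_eq_quadForm : An n = quadForm (range (2 * n + 1)) (covA n) (fun i => i) (2 * n - ·) :=
  rfl

lemma Cpoly_eq_quadForm :
    Cpoly n = quadForm (range (2 * n + 1)) (covA n) (· + 1) (2 * n + 1 - ·) :=
  rfl

/- With `F k = (-1)^k (2n)! (2n+1-k)! k!`, the first sum of `B_n` puts `(2n+1-k) F k` on
`f_k f_{2n+1-k}` and the second, through its index `k - 1`, puts `-k F k` there. -/
lemma Bn_eq_quadForm :
    Bn n = quadForm (range (2 * n + 2)) (covB n) (fun k => k) (2 * n + 1 - ·) := by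
  set F : ℕ → ℤ := fun k => (-1) ^ k * (2 * n)! * (2 * n + 1 - k)! * (k !)
  have hB : ∀ k ∈ range (2 * n + 2), covB n k = (2 * n + 1 - k : ℕ) * F k - k * F k := by
    intro k hk
    rw [mem_range] at hk
    push_cast [show k ≤ 2 * n + 1 by omega]
    simp only [covB, F]
    ring
  have hα : ∀ i ∈ range (2 * n + 1),
      (-1) ^ i * ((2 * n).choose i : ℤ) * (alph n i : ℤ) ^ 2 = (2 * n + 1 - i : ℕ) * F i := by
    intro i hi
    rw [mem_range] at hi
    rw [neg_one_pow_mul_choose_mul_alph_sq n (by omega)]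
    push_cast [show i ≤ 2 * n + 1 by omega]
    ring
  have hβ : ∀ i ∈ range (2 * n + 1),
      (-1) ^ i * ((2 * n).choose i : ℤ) * (bet n i : ℤ) ^ 2 =
        -(((i + 1 : ℕ) : ℤ) * F (i + 1)) := by
    intro i hi
    rw [mem_range] at hi
    rw [neg_one_pow_mul_choose_mul_bet_sq n (by omega)]
    simp only [F, show 2 * n + 1 - (i + 1) = 2 * n - i by omega]
    push_cast
    ring
  calc Bn n
      = (∑ i ∈ range (2 * n + 1), C ((2 * n + 1 - i : ℕ) * F i) * X i * X (2 * n + 1 - i))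
          + ∑ i ∈ range (2 * n + 1),
              C (-(((i + 1 : ℕ) : ℤ) * F (i + 1))) * X (i + 1) * X (2 * n + 1 - (i + 1)) := by
        rw [Bn, ← sum_add_distrib]
        refine sum_congr rfl fun i hi => ?_
        rw [← hα i hi, ← hβ i hi, show 2 * n + 1 - (i + 1) = 2 * n - i by omega]
        simp only [C_mul]
        ring
    _ = (∑ k ∈ range (2 * n + 2), C ((2 * n + 1 - k : ℕ) * F k) * X k * X (2 * n + 1 - k))
          + ∑ k ∈ range (2 * n + 2), C (-((k : ℕ) * F k)) * X k * X (2 * n + 1 - k) := by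
        rw [sum_range_succ _ (2 * n + 1), sum_range_succ' _ (2 * n + 1)]
        simp
    _ = quadForm (range (2 * n + 2)) (covB n) (fun k => k) (2 * n + 1 - ·) := by
        rw [quadForm, ← sum_add_distrib]
        refine sum_congr rfl fun k hk => ?_
        rw [hB k hk, sub_eq_add_neg, C_add]
        ring

end Covariant

lemma sum_consecutive_pairs {M : Type*} [AddCommMonoid M] {a b : ℕ} (hlt : a + 1 < b)
    (F : ℕ → M) : ∑ i ∈ {a, a + 1, b, b + 1}, F i = F a + F (a + 1) + F b + F (b + 1) := by
  rw [sum_insert (by simp only [mem_insert, mem_singleton]; omega),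
    sum_insert (by simp only [mem_insert, mem_singleton]; omega),
    sum_insert (by simp only [mem_singleton]; omega), sum_singleton, add_assoc, add_assoc]

section Coefficient

variable {n : ℕ}

lemma coeff_pair_Bn {u v : ℕ} (huv : u + v = 2 * n + 1) (hlt : u < v) :
    coeff (∑ i ∈ {u, v}, Finsupp.single i 1) (Bn n) = covB n u + covB n v := by
  have hfilter : {k ∈ range (2 * n + 2) | k ∈ ({u, v} : Finset ℕ) ∧
      2 * n + 1 - k ∈ ({u, v} : Finset ℕ) ∧ k ≠ 2 * n + 1 - k} = {u, v} := by
    ext k; simp; omega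
  rw [← mul_one (Bn n), Bn_eq_quadForm, coeff_sum_single_quadForm_mul, hfilter,
    sum_pair hlt.ne, show 2 * n + 1 - u = v by omega, show 2 * n + 1 - v = u by omega]
  simp [pair_comm]

variable {a b : ℕ} (hab : a + b = 2 * n) (hlt : a + 1 < b)
include hab hlt

lemma coeff_Bn_mul_Bn :
    coeff (∑ i ∈ {a, a + 1, b, b + 1}, Finsupp.single i 1) (Bn n * Bn n) =
      2 * (covB n a + covB n (b + 1)) * (covB n (a + 1) + covB n b) := by
  have hfilter : {k ∈ range (2 * n + 2) | k ∈ ({a, a + 1, b, b + 1} : Finset ℕ) ∧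
      2 * n + 1 - k ∈ ({a, a + 1, b, b + 1} : Finset ℕ) ∧ k ≠ 2 * n + 1 - k} =
      {a, a + 1, b, b + 1} := by
    ext k; simp; omega
  have hU : ({a, a + 1, b, b + 1} : Finset ℕ) \ {a, b + 1} = {a + 1, b} := by ext; simp; omega
  have hV : ({a, a + 1, b, b + 1} : Finset ℕ) \ {a + 1, b} = {a, b + 1} := by ext; simp; omega
  nth_rw 1 [Bn_eq_quadForm]
  rw [coeff_sum_single_quadForm_mul, hfilter, sum_consecutive_pairs hlt,
    show 2 * n + 1 - a = b + 1 by omega, show 2 * n + 1 - (a + 1) = b by omega,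
    show 2 * n + 1 - b = a + 1 by omega, show 2 * n + 1 - (b + 1) = a by omega,
    pair_comm b (a + 1), pair_comm (b + 1) a, hU, hV, coeff_pair_Bn (by omega) (by omega),
    coeff_pair_Bn (by omega) (by omega)]
  ring

lemma coeff_An_mul_Cpoly :
    coeff (∑ i ∈ {a, a + 1, b, b + 1}, Finsupp.single i 1) (An n * Cpoly n) =
      (covA n a + covA n b) ^ 2 := by
  have hfilterA : {k ∈ range (2 * n + 1) | k ∈ ({a, a + 1, b, b + 1} : Finset ℕ) ∧
      2 * n - k ∈ ({a, a + 1, b, b + 1} : Finset ℕ) ∧ k ≠ 2 * n - k} = {a, b} := by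
    ext k; simp; omega
  have hfilterC : {k ∈ range (2 * n + 1) | k + 1 ∈ ({a + 1, b + 1} : Finset ℕ) ∧
      2 * n + 1 - k ∈ ({a + 1, b + 1} : Finset ℕ) ∧ k + 1 ≠ 2 * n + 1 - k} = {a, b} := by
    ext k; simp; omega
  have hW : ({a, a + 1, b, b + 1} : Finset ℕ) \ {a, b} = {a + 1, b + 1} := by ext; simp; omega
  have hC :
      coeff (∑ i ∈ {a + 1, b + 1}, Finsupp.single i 1) (Cpoly n) = covA n a + covA n b := by
    rw [← mul_one (Cpoly n), Cpoly_eq_quadForm, coeff_sum_single_quadForm_mul, hfilterC,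
      sum_pair (by omega), show 2 * n + 1 - a = b + 1 by omega,
      show 2 * n + 1 - b = a + 1 by omega]
    simp [pair_comm]
  rw [An_eq_quadForm, coeff_sum_single_quadForm_mul, hfilterA, sum_pair (by omega),
    show 2 * n - a = b by omega, show 2 * n - b = a by omega, pair_comm b a, hW, hC]
  ring

lemma coeff_Δn :
    coeff (∑ i ∈ {a, a + 1, b, b + 1}, Finsupp.single i 1) (Δn n) =
      8 * covB n a * covB n (a + 1) - 16 * covA n a ^ 2 := by
  have hΔ : Δn n = Bn n * Bn n - C 4 * (An n * Cpoly n) := by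
    rw [Δn, map_ofNat]
    ring
  have hB₁ : covB n (b + 1) = covB n a := by
    rw [← covB_two_mul_add_one_sub n (k := a) (by omega), show 2 * n + 1 - a = b + 1 by omega]
  have hB₂ : covB n b = covB n (a + 1) := by
    rw [← covB_two_mul_add_one_sub n (k := a + 1) (by omega),
      show 2 * n + 1 - (a + 1) = b by omega]
  have hA : covA n b = covA n a := by
    rw [← covA_two_mul_sub n (i := a) (by omega), show 2 * n - a = b by omega]
  rw [hΔ, coeff_sub, coeff_C_mul, coeff_Bn_mul_Bn hab hlt, coeff_An_mul_Cpoly hab hlt,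
    hB₁, hB₂, hA]
  ring

lemma coeff_Δn_eq_factorial :
    coeff (Finsupp.single a 1 + Finsupp.single (a + 1) 1 + Finsupp.single b 1 +
        Finsupp.single (b + 1) 1) (Δn n) =
      -8 * ((2 * n)! : ℤ) ^ 2 * (b + 1)! * b ! * (a + 1)! * a ! *
        ((2 * n + 1 - 2 * a) * (2 * n - 1 - 2 * a) + 2 * (a + 1) * (b + 1)) := by
  rw [← sum_consecutive_pairs hlt (Finsupp.single · 1), coeff_Δn hab hlt, covB, covB,
    covA_eq n (by omega), show 2 * n + 1 - a = b + 1 by omega,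
    show 2 * n + 1 - (a + 1) = b by omega, cast_factorial_succ b, cast_factorial_succ a]
  push_cast
  rcases Nat.even_or_odd a with h | h <;> rw [h.neg_one_pow, h.add_one.neg_one_pow] <;> ring

end Coefficient

theorem stmt2_general (n r : ℕ) (hr1 : 2 ≤ r) (hr2 : r ≤ n+1) :
    MvPolynomial.coeff
      (Finsupp.single (n+1-r) 1 + Finsupp.single (n+2-r) 1 +
       Finsupp.single (n-1+r) 1 + Finsupp.single (n+r) 1) (Δn n) =
      -8 * ((2*n).factorial : ℤ)^2 * ((n+r).factorial : ℤ) * ((n+r-1).factorial : ℤ) *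
        ((n+2-r).factorial : ℤ) * ((n+1-r).factorial : ℤ) *
        (2*(n : ℤ)^2 + 4*(n : ℤ) + 2*(r : ℤ)^2 - 4*(r : ℤ) + 3) := by
  rw [show n + r - 1 = n - 1 + r by omega, show n + r = n - 1 + r + 1 by omega,
    show n + 2 - r = n + 1 - r + 1 by omega, coeff_Δn_eq_factorial (by omega) (by omega)]
  push_cast [Nat.cast_sub hr2, Nat.cast_sub (show 1 ≤ n by omega)]
  ring

theorem stmt2 (n r : ℕ) (hn : 1 ≤ n) (hr1 : 2 ≤ r) (hr2 : r ≤ n+1) :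
    MvPolynomial.coeff
      (Finsupp.single (n+1-r) 1 + Finsupp.single (n+2-r) 1 +
       Finsupp.single (n-1+r) 1 + Finsupp.single (n+r) 1) (Δn n) =
      -8 * ((2*n).factorial : ℤ)^2 * ((n+r).factorial : ℤ) * ((n+r-1).factorial : ℤ) *
        ((n+2-r).factorial : ℤ) * ((n+1-r).factorial : ℤ) *
        (2*(n : ℤ)^2 + 4*(n : ℤ) + 2*(r : ℤ)^2 - 4*(r : ℤ) + 3) :=
  stmt2_general n r hr1 hr2
end

section
/- For every odd prime p and every integer m ≥ 7, p does not divide the greatest common divisor of the integers E_m(r) over 2 ≤ r ≤ m−1; equivalently, there exists an integer r with 2 ≤ r ≤ m−1 such that p does not divide E_m(r). -/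
/-!
Writing `a = m - 1`, `s = r - 1` and `g x = 2x² - x`, the cross terms cancel in
`E_m(r) = (a² - s²)(2a² + 2s² - 1) = g(a²) - g(s²)`. Hence `E_m(r) - E_m(s)` does not depend on `m`:
`E_m(2) - E_m(3) = 27` and `E_m(2) - E_m(4) = 152` are coprime, so `E_m(2)`, `E_m(3)`, `E_m(4)`
have no common prime factor.
-/

/-- `E_m(r) = (m−r)(m+r−2)(2(m−1)²+2(r−1)²−1)`. -/
def Efun (m r : ℤ) : ℤ := (m - r) * (m + r - 2) * (2*(m-1)^2 + 2*(r-1)^2 - 1)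

theorem Efun_sub_Efun (m r s : ℤ) : Efun m r - Efun m s = Efun s r := by
  unfold Efun
  ring

/-- Bézout for `Efun 3 2 = 27` and `Efun 4 2 = 152`: `8 * 152 - 45 * 27 = 1`. -/
theorem Efun_bezout (m : ℤ) : 45 * Efun m 3 - 37 * Efun m 2 - 8 * Efun m 4 = 1 := by
  have h3 := Efun_sub_Efun m 2 3
  have h4 := Efun_sub_Efun m 2 4
  norm_num [Efun] at h3 h4 ⊢
  linear_combination 8 * h4 - 45 * h3

theorem gcd_Efun_eq_one (m : ℕ) (hm : 5 ≤ m) :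
    (Finset.Icc 2 (m - 1)).gcd (fun r => Efun (m : ℤ) (r : ℤ)) = 1 := by
  set G := (Finset.Icc 2 (m - 1)).gcd (fun r => Efun (m : ℤ) (r : ℤ))
  have hdvd (r : ℕ) (hr2 : 2 ≤ r) (hr4 : r ≤ 4) : G ∣ Efun m r :=
    Finset.gcd_dvd (Finset.mem_Icc.mpr ⟨hr2, by omega⟩)
  have hG : G ∣ 1 := by
    rw [← Efun_bezout m]
    exact dvd_sub (dvd_sub ((hdvd 3 (by norm_num) (by norm_num)).mul_left 45)
      ((hdvd 2 le_rfl (by norm_num)).mul_left 37)) ((hdvd 4 (by norm_num) le_rfl).mul_left 8)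
  exact Int.eq_one_of_dvd_one (Int.nonneg_of_normalize_eq_self (Finset.normalize_gcd)) hG

theorem stmt4_general (p : ℕ) (hp : p.Prime) (m : ℕ) (hm : 7 ≤ m) :
    ¬ (p : ℤ) ∣ (Finset.Icc 2 (m-1)).gcd (fun r => Efun (m : ℤ) (r : ℤ)) ∧
    ∃ r : ℕ, 2 ≤ r ∧ r ≤ m - 1 ∧ ¬ (p : ℤ) ∣ Efun (m : ℤ) (r : ℤ) := by
  have hgcd := gcd_Efun_eq_one m (by omega)
  have hp1 : ¬ (p : ℤ) ∣ 1 := by exact_mod_cast hp.not_dvd_one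
  refine ⟨hgcd ▸ hp1, ?_⟩
  by_contra! hall
  exact hp1 (hgcd ▸ Finset.dvd_gcd fun r hr =>
    hall r (Finset.mem_Icc.mp hr).1 (Finset.mem_Icc.mp hr).2)

theorem stmt4 (p : ℕ) (hp : p.Prime) (hodd : Odd p) (m : ℕ) (hm : 7 ≤ m) :
    ¬ (p : ℤ) ∣ (Finset.Icc 2 (m-1)).gcd (fun r => Efun (m : ℤ) (r : ℤ)) ∧
    ∃ r : ℕ, 2 ≤ r ∧ r ≤ m - 1 ∧ ¬ (p : ℤ) ∣ Efun (m : ℤ) (r : ℤ) :=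
  stmt4_general p hp m hm
end

section
/- For every integer m ≥ 2, the greatest common divisor g(m) of the binomial coefficients binom(m,r) over 1 ≤ r ≤ m−1 equals p if m = p^k for some prime p and integer k ≥ 1, and equals 1 if m is not a prime power. -/
/-- `g(m)`: the gcd of the binomial coefficients `binom(m,r)` over `1 ≤ r ≤ m−1`. -/
def gBinom (m : ℕ) : ℕ := (Finset.Icc 1 (m-1)).gcd (fun r => m.choose r)

theorem stmt5 (m : ℕ) (hm : 2 ≤ m) :
    (∀ p k : ℕ, p.Prime → 1 ≤ k → m = p ^ k → gBinom m = p) ∧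
    (¬ IsPrimePow m → gBinom m = 1) := by
  refine ⟨?_, Choose.gcd_choose_eq_one_of_not_isPrimePow hm⟩
  rintro p k hp hk rfl
  rw [gBinom, Choose.gcd_choose_eq_minFac_of_isPrimePow ⟨p, k, hp.prime, hk, rfl⟩,
    hp.pow_minFac (by omega)]
end

section
/- Let n ≥ 1 be an integer and let p be an odd prime with p dividing n. Then p divides α_i and p divides β_i for every 0 ≤ i ≤ 2n, and consequently p² divides every integer coefficient of each of the polynomials A_n, B_n, and C_n. -/
open MvPolynomial Finset

/-!
Since `p ≤ n`, any two natural numbers `a, b` with `a + b = 2n + 1` have `p ≤ a` or `p ≤ b`, so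
`p ∣ a! b!`; both `α_i` and `β_i` are of this shape. Every coefficient of `A_n` and `C_n` carries
the factor `α_i β_i`, and every coefficient of `B_n` a factor `α_i²` or `β_i²`, hence is divisible
by `p²`.
-/

open Nat in
theorem dvd_factorial_mul_factorial_of_two_mul_le {p a b : ℕ} (hp : 0 < p)
    (h : 2 * p ≤ a + b + 1) : p ∣ a ! * b ! := by
  rcases le_or_gt p a with ha | ha
  · exact (dvd_factorial hp ha).mul_right _
  · exact (dvd_factorial hp (by omega)).mul_left _

theorem dvd_alph {n p i : ℕ} (hp : 0 < p) (hpn : p ≤ n) (hi : i ≤ 2 * n + 1) : p ∣ alph n i :=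
  dvd_factorial_mul_factorial_of_two_mul_le hp (by omega)

theorem dvd_bet {n p i : ℕ} (hp : 0 < p) (hpn : p ≤ n) (hi : i ≤ 2 * n) : p ∣ bet n i :=
  dvd_factorial_mul_factorial_of_two_mul_le hp (by omega)

theorem sq_dvd_alph_mul_bet {n p i : ℕ} (hp : 0 < p) (hpn : p ≤ n) (hi : i ≤ 2 * n) :
    (p : ℤ) ^ 2 ∣ alph n i * bet n i := by
  rw [sq]
  exact mul_dvd_mul (Int.natCast_dvd_natCast.2 (dvd_alph hp hpn (by omega)))
    (Int.natCast_dvd_natCast.2 (dvd_bet hp hpn hi))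

theorem le_two_mul_of_mem_range {n i : ℕ} (hi : i ∈ range (2 * n + 1)) : i ≤ 2 * n :=
  Nat.lt_succ_iff.1 (mem_range.1 hi)

theorem C_sq_dvd_An {n p : ℕ} (hp : 0 < p) (hpn : p ≤ n) : C ((p : ℤ) ^ 2) ∣ An n := by
  refine dvd_sum fun i hi => dvd_mul_of_dvd_left (dvd_mul_of_dvd_left (map_dvd C ?_) _) _
  rw [mul_assoc]
  exact dvd_mul_of_dvd_right (sq_dvd_alph_mul_bet hp hpn (le_two_mul_of_mem_range hi)) _

theorem C_sq_dvd_Cpoly {n p : ℕ} (hp : 0 < p) (hpn : p ≤ n) : C ((p : ℤ) ^ 2) ∣ Cpoly n := by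
  refine dvd_sum fun i hi => dvd_mul_of_dvd_left (dvd_mul_of_dvd_left (map_dvd C ?_) _) _
  rw [mul_assoc]
  exact dvd_mul_of_dvd_right (sq_dvd_alph_mul_bet hp hpn (le_two_mul_of_mem_range hi)) _

theorem C_sq_dvd_Bn {n p : ℕ} (hp : 0 < p) (hpn : p ≤ n) : C ((p : ℤ) ^ 2) ∣ Bn n := by
  refine dvd_sum fun i hi => dvd_mul_of_dvd_right (dvd_add ?_ ?_) _
  all_goals refine dvd_mul_of_dvd_left (dvd_mul_of_dvd_left (map_dvd C (pow_dvd_pow_of_dvd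
    (Int.natCast_dvd_natCast.2 ?_) 2)) _) _
  · exact dvd_alph hp hpn (by have := le_two_mul_of_mem_range hi; omega)
  · exact dvd_bet hp hpn (le_two_mul_of_mem_range hi)

theorem stmt6_general (n : ℕ) (hn : 1 ≤ n) (p : ℕ)
    (hdvd : p ∣ n) :
    (∀ i : ℕ, i ≤ 2*n → p ∣ alph n i ∧ p ∣ bet n i) ∧
    (∀ m : ℕ →₀ ℕ, ((p : ℤ)^2 ∣ MvPolynomial.coeff m (An n) ∧
      (p : ℤ)^2 ∣ MvPolynomial.coeff m (Bn n) ∧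
      (p : ℤ)^2 ∣ MvPolynomial.coeff m (Cpoly n))) := by
  have hp : 0 < p := Nat.pos_of_dvd_of_pos hdvd hn
  have hpn : p ≤ n := Nat.le_of_dvd hn hdvd
  refine ⟨fun i hi => ⟨dvd_alph hp hpn (by omega), dvd_bet hp hpn hi⟩, fun m => ⟨?_, ?_, ?_⟩⟩
  · exact (C_dvd_iff_dvd_coeff _ _).1 (C_sq_dvd_An hp hpn) m
  · exact (C_dvd_iff_dvd_coeff _ _).1 (C_sq_dvd_Bn hp hpn) m
  · exact (C_dvd_iff_dvd_coeff _ _).1 (C_sq_dvd_Cpoly hp hpn) m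

theorem stmt6 (n : ℕ) (hn : 1 ≤ n) (p : ℕ) (hp : p.Prime) (hodd : Odd p)
    (hdvd : p ∣ n) :
    (∀ i : ℕ, i ≤ 2*n → p ∣ alph n i ∧ p ∣ bet n i) ∧
    (∀ m : ℕ →₀ ℕ, ((p : ℤ)^2 ∣ MvPolynomial.coeff m (An n) ∧
      (p : ℤ)^2 ∣ MvPolynomial.coeff m (Bn n) ∧
      (p : ℤ)^2 ∣ MvPolynomial.coeff m (Cpoly n))) :=
  stmt6_general n hn p hdvd
end

section
/- For every integer n ≥ 1 and every integer k with 1 ≤ k ≤ N = 2n, the coefficient b_k of the monomial f_k·f_{N+1−k} in B_n satisfies b_k·binom(N,k) = 2·(−1)^k·(N!)²·(N+1−k)·(N+1−2k), where N+1−2k is interpreted as an integer (possibly negative). In particular b_k ≠ 0. -/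
open MvPolynomial Finset

/-!
Only four summands of `B_n` contain `f_k f_{N+1-k}`: `i = k, N+1-k` among the `α`-terms and
`i = k-1, N-k` among the `β`-terms. All four carry the same weight `α_k² = (k! (N+1-k)!)²`, and
their signed binomials add up to `2 (-1)^k (C(N,k) - C(N,k-1))`. Multiplying by `C(N,k)` and using
`α_k C(N,k) = (N+1-k) N!`, `α_k C(N,k-1) = k N!` gives the formula; `b_k ≠ 0` because
`N+1-2k` is odd.
-/

lemma neg_one_pow_sub_of_le {R : Type*} [Monoid R] [HasDistribNeg R] {m n : ℕ} (h : m ≤ n) :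
    (-1 : R) ^ (n - m) = (-1) ^ n * (-1) ^ m := by
  conv_rhs => rw [← Nat.sub_add_cancel h, pow_add, mul_assoc, ← pow_add, ← two_mul, pow_mul,
    neg_one_sq, one_pow, mul_one]

lemma MvPolynomial.coeff_single_add_single_X_mul_X {R σ : Type*} [CommSemiring R]
    [DecidableEq σ] (a b c d : σ) :
    coeff (Finsupp.single a 1 + Finsupp.single b 1) (X c * X d : MvPolynomial σ R) =
      if c = a ∧ d = b ∨ c = b ∧ d = a then 1 else 0 := by
  rw [X, X, monomial_mul, one_mul, coeff_monomial]
  simp [Finsupp.single_add_single_eq_single_add_single]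

lemma MvPolynomial.coeff_single_add_single_sum_C_mul_X_mul_X {R σ ι : Type*} [CommSemiring R]
    [DecidableEq σ] (s : Finset ι) (g : ι → R) (p q : ι → σ) (a b : σ) :
    coeff (Finsupp.single a 1 + Finsupp.single b 1) (∑ i ∈ s, C (g i) * X (p i) * X (q i)) =
      ∑ i ∈ s with p i = a ∧ q i = b ∨ p i = b ∧ q i = a, g i := by
  simp only [coeff_sum, mul_assoc, coeff_C_mul, coeff_single_add_single_X_mul_X, mul_ite,
    mul_one, mul_zero, sum_filter]

section Bn

variable {n k : ℕ}

lemma alph_two_mul_add_one_sub (hk : k ≤ 2 * n + 1) : alph n (2 * n + 1 - k) = alph n k := by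
  rw [alph, alph, Nat.sub_sub_self hk, mul_comm]

lemma bet_sub_one (hk : 1 ≤ k) : bet n (k - 1) = alph n k := by
  rw [bet, alph, Nat.sub_add_cancel hk, show 2 * n - (k - 1) = 2 * n + 1 - k by omega]

lemma bet_two_mul_sub (hk : k ≤ 2 * n) : bet n (2 * n - k) = alph n k := by
  rw [bet, alph, Nat.sub_sub_self hk, show 2 * n - k + 1 = 2 * n + 1 - k by omega, mul_comm]

lemma alph_mul_choose (hk : k ≤ 2 * n) :
    alph n k * (2 * n).choose k = (2 * n + 1 - k) * (2 * n).factorial := by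
  rw [alph, show 2 * n + 1 - k = 2 * n - k + 1 by omega, Nat.factorial_succ,
    ← Nat.choose_mul_factorial_mul_factorial hk]
  ring

lemma alph_mul_choose_sub_one (hk1 : 1 ≤ k) (hk2 : k ≤ 2 * n + 1) :
    alph n k * (2 * n).choose (k - 1) = k * (2 * n).factorial := by
  rw [alph, ← Nat.mul_factorial_pred (by omega : k ≠ 0),
    ← Nat.choose_mul_factorial_mul_factorial (by omega : k - 1 ≤ 2 * n),
    show 2 * n - (k - 1) = 2 * n + 1 - k by omega]
  ring

lemma Bn_eq_add (n : ℕ) : Bn n =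
    ∑ i ∈ range (2 * n + 1),
        C ((-1 : ℤ) ^ i * (2 * n).choose i * alph n i ^ 2) * X i * X (2 * n + 1 - i) +
      ∑ i ∈ range (2 * n + 1),
        C ((-1 : ℤ) ^ i * (2 * n).choose i * bet n i ^ 2) * X (i + 1) * X (2 * n - i) := by
  rw [Bn, ← sum_add_distrib]
  refine sum_congr rfl fun i _ => ?_
  simp only [map_mul]
  ring

lemma coeff_Bn (hk1 : 1 ≤ k) (hk2 : k ≤ 2 * n) :
    coeff (Finsupp.single k 1 + Finsupp.single (2 * n + 1 - k) 1) (Bn n) =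
      2 * (-1 : ℤ) ^ k * alph n k ^ 2 * ((2 * n).choose k - (2 * n).choose (k - 1)) := by
  have hα : {i ∈ range (2 * n + 1) | i = k ∧ 2 * n + 1 - i = 2 * n + 1 - k ∨
      i = 2 * n + 1 - k ∧ 2 * n + 1 - i = k} = {k, 2 * n + 1 - k} := by
    ext i
    simp only [mem_filter, mem_range, mem_insert, mem_singleton]
    omega
  have hβ : {i ∈ range (2 * n + 1) | i + 1 = k ∧ 2 * n - i = 2 * n + 1 - k ∨
      i + 1 = 2 * n + 1 - k ∧ 2 * n - i = k} = {k - 1, 2 * n - k} := by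
    ext i
    simp only [mem_filter, mem_range, mem_insert, mem_singleton]
    omega
  rw [Bn_eq_add, coeff_add, coeff_single_add_single_sum_C_mul_X_mul_X,
    coeff_single_add_single_sum_C_mul_X_mul_X, hα, hβ, sum_pair (by omega), sum_pair (by omega),
    alph_two_mul_add_one_sub (by omega), bet_sub_one hk1, bet_two_mul_sub hk2,
    Nat.choose_symm hk2, Nat.choose_symm_of_eq_add (by omega : 2 * n = 2 * n + 1 - k + (k - 1)),
    neg_one_pow_sub_of_le (by omega : k ≤ 2 * n + 1), neg_one_pow_sub_of_le hk1,
    neg_one_pow_sub_of_le hk2]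
  simp only [pow_succ, (even_two_mul n).neg_one_pow]
  ring

lemma coeff_Bn_mul_choose (hk1 : 1 ≤ k) (hk2 : k ≤ 2 * n) :
    coeff (Finsupp.single k 1 + Finsupp.single (2 * n + 1 - k) 1) (Bn n) *
        ((2 * n).choose k : ℤ) =
      2 * (-1 : ℤ) ^ k * ((2 * n).factorial : ℤ) ^ 2 * ((2 * n + 1 - k : ℕ) : ℤ) *
        ((2 * n + 1 : ℤ) - 2 * (k : ℤ)) := by
  have h₁ : (alph n k * (2 * n).choose k : ℤ) =
      ((2 * n + 1 - k : ℕ) : ℤ) * (2 * n).factorial := by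
    exact_mod_cast alph_mul_choose hk2
  have h₂ : (alph n k * (2 * n).choose (k - 1) : ℤ) = k * (2 * n).factorial := by
    exact_mod_cast alph_mul_choose_sub_one hk1 (by omega)
  calc _ = 2 * (-1 : ℤ) ^ k * (alph n k * (2 * n).choose k) *
        (alph n k * (2 * n).choose k - alph n k * (2 * n).choose (k - 1)) := by
        rw [coeff_Bn hk1 hk2]
        ring
    _ = _ := by
        rw [h₁, h₂, Nat.cast_sub (by omega)]
        push_cast
        ring

end Bn

theorem stmt7_general (n k : ℕ) (hk1 : 1 ≤ k) (hk2 : k ≤ 2*n) :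
    MvPolynomial.coeff (Finsupp.single k 1 + Finsupp.single (2*n+1-k) 1) (Bn n) *
        ((2*n).choose k : ℤ) =
      2 * (-1 : ℤ)^k * ((2*n).factorial : ℤ)^2 * ((2*n+1-k : ℕ) : ℤ) *
        ((2*n+1 : ℤ) - 2*(k : ℤ)) ∧
    MvPolynomial.coeff (Finsupp.single k 1 + Finsupp.single (2*n+1-k) 1) (Bn n) ≠ 0 := by
  have hformula := coeff_Bn_mul_choose hk1 hk2
  refine ⟨hformula, left_ne_zero_of_mul (b := ((2 * n).choose k : ℤ)) ?_⟩
  rw [hformula]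
  refine mul_ne_zero (mul_ne_zero ?_ (by omega)) (by omega)
  simp [Nat.factorial_ne_zero]

theorem stmt7 (n k : ℕ) (hn : 1 ≤ n) (hk1 : 1 ≤ k) (hk2 : k ≤ 2*n) :
    MvPolynomial.coeff (Finsupp.single k 1 + Finsupp.single (2*n+1-k) 1) (Bn n) *
        ((2*n).choose k : ℤ) =
      2 * (-1 : ℤ)^k * ((2*n).factorial : ℤ)^2 * ((2*n+1-k : ℕ) : ℤ) *
        ((2*n+1 : ℤ) - 2*(k : ℤ)) ∧
    MvPolynomial.coeff (Finsupp.single k 1 + Finsupp.single (2*n+1-k) 1) (Bn n) ≠ 0 :=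
  stmt7_general n k hk1 hk2
end

section
/- Let n ≥ 2 be an even integer such that n+2 is not a power of 2. Then max_{0 ≤ j ≤ 2n} v_2(binom(2n+1, j)) > v_2(binom(2n+1, n)). -/
/-! Write `n + 2 = 2 ^ a * m` with `m` odd; `n` even gives `a ≥ 1` and `n + 2 ≠ 2 ^ a` gives
`m ≥ 3`. With `d = 2 ^ a`, the multinomial identity
`C(2n+1, n) * C(n, d) = C(2n+1, n-d) * C(n+1+d, d)` and Lucas' congruence
`C(N, 2 ^ a) ≡ ⌊N / 2 ^ a⌋ (mod 2)` show that `C(n, d)` is even (`⌊n / d⌋ = m - 1`) while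
`C(n+1+d, d)` is odd (`⌊(n+1+d) / d⌋ = m`), so `v₂ C(2n+1, n-d) > v₂ C(2n+1, n)`. -/

theorem Nat.choose_prime_pow_modEq_div {p : ℕ} [Fact p.Prime] (N a : ℕ) :
    N.choose (p ^ a) ≡ N / p ^ a [MOD p] := by
  induction a generalizing N with
  | zero => simp [Nat.ModEq.refl]
  | succ a ih =>
    have hp : 0 < p := (Fact.out : p.Prime).pos
    calc N.choose (p ^ (a + 1))
        ≡ (N % p).choose (p ^ (a + 1) % p) * (N / p).choose (p ^ (a + 1) / p) [MOD p] :=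
          Choose.choose_modEq_choose_mod_mul_choose_div_nat
      _ = (N / p).choose (p ^ a) := by
          rw [pow_succ, Nat.mul_mod_left, Nat.mul_div_cancel _ hp, Nat.choose_zero_right, one_mul]
      _ ≡ N / p / p ^ a [MOD p] := ih _
      _ = N / p ^ (a + 1) := by rw [Nat.div_div_eq_div_mul, pow_succ']

theorem Nat.dvd_choose_prime_pow_iff {p : ℕ} [Fact p.Prime] (N a : ℕ) :
    p ∣ N.choose (p ^ a) ↔ p ∣ N / p ^ a :=
  (Nat.choose_prime_pow_modEq_div N a).dvd_iff dvd_rfl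

theorem Nat.choose_mul_choose_eq_choose_sub_mul_choose {N k d : ℕ} (hdk : d ≤ k) (hkN : k ≤ N) :
    N.choose k * k.choose d = N.choose (k - d) * (N - k + d).choose d := by
  rw [← Nat.choose_symm hdk, Nat.choose_mul (Nat.sub_le k d), Nat.sub_sub_self hdk]
  congr 2
  omega

theorem padicValNat_lt_of_mul_eq_mul {p x y u v : ℕ} [Fact p.Prime] (h : x * u = y * v)
    (hy : y ≠ 0) (hu : u ≠ 0) (hpu : p ∣ u) (hpv : ¬ p ∣ v) :
    padicValNat p x < padicValNat p y := by
  have hx : x ≠ 0 := by rintro rfl; simp_all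
  have hv : v ≠ 0 := by rintro rfl; simp_all
  have := congrArg (padicValNat p) h
  rw [padicValNat.mul hx hu, padicValNat.mul hy hv, padicValNat.eq_zero_of_not_dvd hpv] at this
  have := one_le_padicValNat_of_dvd hu hpu
  omega

theorem padicValNat_two_choose_lt_of_add_two_eq {n a m : ℕ} (ha : 1 ≤ a) (hm : Odd m)
    (hm1 : 1 < m) (hnm : n + 2 = 2 ^ a * m) :
    padicValNat 2 ((2 * n + 1).choose n) < padicValNat 2 ((2 * n + 1).choose (n - 2 ^ a)) := by
  obtain ⟨q, rfl⟩ := hm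
  have h2a : 2 ≤ 2 ^ a := Nat.le_self_pow (by omega) 2
  have hdn : 2 ^ a ≤ n := by nlinarith
  have hlow : n / 2 ^ a = 2 * q := by
    apply Nat.div_eq_of_lt_le <;> nlinarith
  have hhigh : (2 * n + 1 - n + 2 ^ a) / 2 ^ a = 2 * q + 1 := by
    apply Nat.div_eq_of_lt_le <;> (rw [show 2 * n + 1 - n = n + 1 by omega]; nlinarith)
  refine padicValNat_lt_of_mul_eq_mul
    (Nat.choose_mul_choose_eq_choose_sub_mul_choose hdn (by omega))
    (Nat.choose_pos (by omega)).ne' (Nat.choose_pos hdn).ne' ?_ ?_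
  · rw [Nat.dvd_choose_prime_pow_iff, hlow]
    exact dvd_mul_right 2 q
  · rw [Nat.dvd_choose_prime_pow_iff, hhigh]
    omega

theorem stmt12_general (n : ℕ) (heven : Even n)
    (hpow : ∀ k : ℕ, n + 2 ≠ 2 ^ k) :
    padicValNat 2 ((2*n+1).choose n) <
      (Finset.range (2*n+1)).sup (fun j => padicValNat 2 ((2*n+1).choose j)) := by
  obtain ⟨a, m, hm, hnm⟩ := Nat.exists_eq_two_pow_mul_odd (n := n + 2) (by omega)
  have ha : 1 ≤ a := by
    rcases Nat.eq_zero_or_pos a with rfl | ha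
    · rw [pow_zero, one_mul] at hnm
      exact absurd (hnm ▸ heven.add even_two) (Nat.not_even_iff_odd.2 hm)
    · exact ha
  have hm1 : 1 < m := by
    rcases hm with ⟨q, rfl⟩
    rcases Nat.eq_zero_or_pos q with rfl | hq
    · exact absurd (by simpa using hnm) (hpow a)
    · omega
  refine (padicValNat_two_choose_lt_of_add_two_eq ha hm hm1 hnm).trans_le ?_
  exact Finset.le_sup (f := fun j => padicValNat 2 ((2*n+1).choose j))
    (Finset.mem_range.2 (by have := n.sub_le (2 ^ a); omega))

theorem stmt12 (n : ℕ) (hn : 2 ≤ n) (heven : Even n)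
    (hpow : ∀ k : ℕ, n + 2 ≠ 2 ^ k) :
    padicValNat 2 ((2*n+1).choose n) <
      (Finset.range (2*n+1)).sup (fun j => padicValNat 2 ((2*n+1).choose j)) :=
  stmt12_general n heven hpow
end

section
/- Define F_N(k) = v_3(binom(N,k)) and G_A(a) = F_A(a) + v_3(A−a). Then for all integers A ≥ 0: (i) for 0 ≤ a ≤ A and r ∈ {0,1,2}, F_{3A+2}(3a+r) = F_A(a); (ii) for 0 ≤ a ≤ A−1, F_{3A}(3a) = F_A(a), F_{3A}(3a+1) = G_A(a)+1, and F_{3A}(3a+2) = G_A(a)+1; (iii) for 0 ≤ a ≤ A−1, F_{3A+1}(3a) = F_A(a), F_{3A+1}(3a+1) = F_A(a), and F_{3A+1}(3a+2) = G_A(a)+1. -/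
/-!
Write `v_p (N choose k) = v_p N! - v_p k! - v_p (N - k)!` and use Legendre's formula in the form
`v_p (p m + r)! = v_p m! + m` for `r < p`. With `N = p A + s` and `k = p a + r`, if `r ≤ s` the
subtraction `N - k = p (A - a) + (s - r)` has no borrow in the last base-`p` digit and the linear
terms cancel, so the valuation is that of `A choose a`. If `s < r` there is a borrow,
`N - k = p (A - a - 1) + (p + s - r)`: the linear terms leave an extra `1`, and replacing
`(A - a - 1)!` by `(A - a)!` costs `v_p (A - a)`.
-/

/-- `F_N(k) = v_3(binom(N,k))`. -/
def F3 (N k : ℕ) : ℕ := padicValNat 3 (N.choose k)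

/-- `G_A(a) = F_A(a) + v_3(A - a)`. -/
def G3 (A a : ℕ) : ℕ := F3 A a + padicValNat 3 (A - a)

open Nat

section

variable {p : ℕ} [Fact p.Prime]

theorem padicValNat_choose_add_factorials {n k : ℕ} (hkn : k ≤ n) :
    padicValNat p (n.choose k) + padicValNat p k ! + padicValNat p (n - k)! =
      padicValNat p n ! := by
  have hc : n.choose k ≠ 0 := (choose_pos hkn).ne'
  rw [← padicValNat.mul hc (factorial_ne_zero _),
    ← padicValNat.mul (mul_ne_zero hc (factorial_ne_zero _)) (factorial_ne_zero _),
    choose_mul_factorial_mul_factorial hkn]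

theorem padicValNat_factorial_mul_add_of_lt (m : ℕ) {r : ℕ} (hr : r < p) :
    padicValNat p (p * m + r)! = padicValNat p m ! + m := by
  rw [padicValNat_factorial_mul_add m hr, padicValNat_factorial_mul]

theorem padicValNat_factorial_succ (m : ℕ) :
    padicValNat p (m + 1)! = padicValNat p m ! + padicValNat p (m + 1) := by
  rw [factorial_succ, padicValNat.mul (succ_ne_zero m) (factorial_ne_zero m), add_comm]

theorem padicValNat_choose_mul_add_mul_add_of_le {A a r s : ℕ} (ha : a ≤ A) (hrs : r ≤ s)
    (hs : s < p) :
    padicValNat p ((p * A + s).choose (p * a + r)) = padicValNat p (A.choose a) := by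
  obtain ⟨b, rfl⟩ := Nat.exists_eq_add_of_le ha
  have hsub : p * (a + b) + s - (p * a + r) = p * b + (s - r) := by rw [mul_add]; omega
  have hN := padicValNat_choose_add_factorials (p := p) (n := p * (a + b) + s) (k := p * a + r)
    (by rw [mul_add]; omega)
  have hA := padicValNat_choose_add_factorials (p := p) ha
  rw [hsub, padicValNat_factorial_mul_add_of_lt _ (by omega),
    padicValNat_factorial_mul_add_of_lt _ (by omega),
    padicValNat_factorial_mul_add_of_lt _ (by omega)] at hN
  rw [Nat.add_sub_cancel_left] at hA
  omega

theorem padicValNat_choose_mul_add_mul_add_of_lt {A a r s : ℕ} (ha : a < A) (hsr : s < r)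
    (hr : r < p) :
    padicValNat p ((p * A + s).choose (p * a + r)) =
      padicValNat p (A.choose a) + padicValNat p (A - a) + 1 := by
  obtain ⟨b, rfl⟩ := Nat.exists_eq_add_of_lt ha
  have hsub : p * (a + b + 1) + s - (p * a + r) = p * b + (p + s - r) := by
    rw [mul_add, mul_add, mul_one]; omega
  have hN := padicValNat_choose_add_factorials (p := p) (n := p * (a + b + 1) + s)
    (k := p * a + r) (by rw [mul_add, mul_add]; omega)
  have hA := padicValNat_choose_add_factorials (p := p) ha.le
  rw [hsub, padicValNat_factorial_mul_add_of_lt _ (by omega),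
    padicValNat_factorial_mul_add_of_lt _ (by omega),
    padicValNat_factorial_mul_add_of_lt _ (by omega)] at hN
  rw [show a + b + 1 - a = b + 1 by omega] at hA ⊢
  rw [padicValNat_factorial_succ] at hA
  omega

end

theorem stmt15 (A : ℕ) :
    (∀ a : ℕ, a ≤ A → ∀ r : ℕ, r ≤ 2 → F3 (3*A+2) (3*a+r) = F3 A a) ∧
    (∀ a : ℕ, a ≤ A - 1 → a < A →
      F3 (3*A) (3*a) = F3 A a ∧
      F3 (3*A) (3*a+1) = G3 A a + 1 ∧
      F3 (3*A) (3*a+2) = G3 A a + 1) ∧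
    (∀ a : ℕ, a ≤ A - 1 → a < A →
      F3 (3*A+1) (3*a) = F3 A a ∧
      F3 (3*A+1) (3*a+1) = F3 A a ∧
      F3 (3*A+1) (3*a+2) = G3 A a + 1) := by
  have : Fact (Nat.Prime 3) := ⟨Nat.prime_three⟩
  have noBorrow :
      ∀ {a r s : ℕ}, a ≤ A → r ≤ s → s < 3 → F3 (3*A+s) (3*a+r) = F3 A a :=
    fun ha hrs hs => padicValNat_choose_mul_add_mul_add_of_le ha hrs hs
  have borrow :
      ∀ {a r s : ℕ}, a < A → s < r → r < 3 → F3 (3*A+s) (3*a+r) = G3 A a + 1 :=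
    fun ha hsr hr => padicValNat_choose_mul_add_mul_add_of_lt ha hsr hr
  refine ⟨fun a ha r hr => noBorrow ha hr (by norm_num), fun a _ ha => ⟨?_, ?_, ?_⟩,
    fun a _ ha => ⟨?_, ?_, ?_⟩⟩
  · exact noBorrow (r := 0) (s := 0) ha.le le_rfl (by norm_num)
  · exact borrow (s := 0) ha (by norm_num) (by norm_num)
  · exact borrow (s := 0) ha (by norm_num) (by norm_num)
  · exact noBorrow (r := 0) ha.le (by norm_num) (by norm_num)
  · exact noBorrow ha.le le_rfl (by norm_num)
  · exact borrow ha (by norm_num) (by norm_num)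
end

section
/- For every integer A ≥ 1, there exists an integer a with 0 ≤ a ≤ A−1 and 2a < A such that G_A(a) = max_{0 ≤ a' ≤ A−1} G_A(a'); that is, the function G_A attains its maximum on {0,…,A−1} at some index a < A/2. -/
/-!
From `binom(A, a) * (A - a) = A * binom(A - 1, a)` we get
`G_A(a) = v_3(A) + v_3(binom(A - 1, a))`, which is invariant under `a ↦ A - 1 - a`.
So a maximiser in the upper half of `{0, …, A - 1}` reflects to one in the lower half.
-/

theorem padicValNat_choose_add_padicValNat_sub {p A a : ℕ} [Fact p.Prime] (ha : a < A) :
    padicValNat p (A.choose a) + padicValNat p (A - a) =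
      padicValNat p A + padicValNat p ((A - 1).choose a) := by
  obtain ⟨n, rfl⟩ : ∃ n, A = n + 1 := ⟨A - 1, by omega⟩
  have hid : padicValNat p (n.choose a * (n + 1)) =
      padicValNat p ((n + 1).choose a * (n + 1 - a)) :=
    congrArg (padicValNat p) (Nat.choose_mul_succ_eq n a)
  rw [padicValNat.mul (Nat.choose_pos (by omega)).ne' (by omega),
    padicValNat.mul (Nat.choose_pos (by omega)).ne' (by omega)] at hid
  rw [Nat.add_sub_cancel]
  omega

theorem exists_max_lower_half_of_reflect {α : Type*} [LinearOrder α] {f : ℕ → α} {A : ℕ}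
    (hA : 0 < A) (hf : ∀ a < A, f (A - 1 - a) = f a) :
    ∃ a, 2 * a < A ∧ ∀ a' < A, f a' ≤ f a := by
  obtain ⟨a, ha, hmax⟩ :=
    Finset.exists_max_image (Finset.range A) f ⟨0, Finset.mem_range.2 hA⟩
  simp only [Finset.mem_range] at ha hmax
  by_cases hlow : 2 * a < A
  · exact ⟨a, hlow, hmax⟩
  · exact ⟨A - 1 - a, by omega, fun a' ha' => hf a ha ▸ hmax a' ha'⟩

theorem G3_reflect {A a : ℕ} (ha : a < A) : G3 A (A - 1 - a) = G3 A a := by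
  have ha' : A - 1 - a < A := by omega
  have key := padicValNat_choose_add_padicValNat_sub (p := 3) ha
  have key' := padicValNat_choose_add_padicValNat_sub (p := 3) ha'
  rw [Nat.choose_symm (by omega)] at key'
  unfold G3 F3
  omega

theorem stmt16 (A : ℕ) (hA : 1 ≤ A) :
    ∃ a : ℕ, a ≤ A - 1 ∧ 2 * a < A ∧ ∀ a' : ℕ, a' ≤ A - 1 → G3 A a' ≤ G3 A a := by
  obtain ⟨a, hlow, hmax⟩ := exists_max_lower_half_of_reflect hA fun _ => G3_reflect
  exact ⟨a, by omega, hlow, fun a' ha' => hmax a' (by omega)⟩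
end

section
/- Let B ≥ 1 be an odd integer. (i) If B ≠ 2·3^t − 1 for every integer t ≥ 0, then G_B attains its maximum over {0,…,B−1} at some index a with a < (B−1)/2. (ii) If B = 2·3^t − 1 for some integer t ≥ 0, then G_B has a unique maximizer on {0,…,B−1}, namely a = (B−1)/2. -/
/-!
Write `B = N + 1`. Since `C(N+1, a) (N+1-a) = (N+1) C(N, a)`, we have
`G_B(a) = v₃(N+1) + v₃(C(N, a))`, so it suffices to maximise `v_p(C(N, a))` over `a ≤ N`.
By Kummer's theorem this counts the carries in the base-`p` addition `a + (N - a)`. A carry out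
of position `i` forces `p^i ≤ N` and `p^i ∤ N + 1`, so there are at most `log_p N - v_p(N+1)` of
them, and `a = p^s - p^j` (`s = log_p N`, `j = v_p(N+1)`) realises all of them. Either this `a` or
its mirror `N - a` lies below `N/2`, unless `2a = N`, which forces `j = 0` and `N + 1 = 2p^s - 1`.
For `N = 2p^t - 2` a maximiser must carry out of the top position `t`, and `N mod p^t = p^t - 2`
then pins it down to `p^t - 1`.
-/

open Finset Nat

/-- The positions `i ≥ 1` at which adding `a` and `N - a` in base `p` produces a carry. -/
def carries (p N a : ℕ) : Finset ℕ := {i ∈ Ico 1 (log p N + 1) | N % p ^ i < a % p ^ i}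

lemma le_mod_add_mod_sub_iff {q a N : ℕ} (hq : 0 < q) (h : a ≤ N) :
    q ≤ a % q + (N - a) % q ↔ N % q < a % q := by
  have hsum := Nat.add_mod_add_ite a (N - a) q
  have := Nat.mod_lt (N - a) hq
  rw [Nat.add_sub_cancel' h] at hsum
  split_ifs at hsum <;> omega

lemma padicValNat_choose_eq_card_carries {p N a : ℕ} [hp : Fact p.Prime] (h : a ≤ N) :
    padicValNat p (N.choose a) = #(carries p N a) := by
  rw [padicValNat_choose h (lt_add_one _), carries]
  congr 1
  exact filter_congr fun i _ => le_mod_add_mod_sub_iff (pow_pos hp.out.pos i) h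

lemma not_dvd_add_one_of_mod_lt_mod {m N a : ℕ} (h : N % m < a % m) : ¬ m ∣ N + 1 := by
  intro hdvd
  have hm : 0 < m := Nat.pos_of_dvd_of_pos hdvd N.succ_pos
  have hmod : m ∣ N % m + 1 := by
    have := Nat.mod_add_div N m
    rwa [← this, add_right_comm, Nat.dvd_add_left (dvd_mul_right m _)] at hdvd
  have := Nat.mod_lt a hm
  exact absurd (Nat.eq_zero_of_dvd_of_lt hmod (by omega)) (Nat.succ_ne_zero _)

lemma pow_sub_pow_mod_pow {p i j s : ℕ} (hp : 0 < p) (hji : j ≤ i) (his : i ≤ s) :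
    (p ^ s - p ^ j) % p ^ i = p ^ i - p ^ j := by
  have hsplit : p ^ i * p ^ (s - i) = p ^ s := by rw [← pow_add, Nat.add_sub_cancel' his]
  have hmul : p ^ i * (p ^ (s - i) - 1) = p ^ s - p ^ i := by rw [Nat.mul_sub, mul_one, hsplit]
  have hj := Nat.pow_le_pow_right hp hji
  have hi := Nat.pow_le_pow_right hp his
  have hj0 := pow_pos hp j
  rw [show p ^ s - p ^ j = (p ^ i - p ^ j) + p ^ i * (p ^ (s - i) - 1) by omega,
    Nat.add_mul_mod_self_left, Nat.mod_eq_of_lt (by omega)]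

lemma add_le_of_dvd_of_lt {d r q : ℕ} (hr : d ∣ r) (hq : d ∣ q) (hrq : r < q) : r + d ≤ q := by
  obtain ⟨x, rfl⟩ := hr
  obtain ⟨y, rfl⟩ := hq
  have : x < y := Nat.lt_of_mul_lt_mul_left hrq
  nlinarith

lemma mod_pow_lt_pow_sub_pow {p i j N : ℕ} (hp : 0 < p) (hji : j ≤ i) (hj : p ^ j ∣ N + 1)
    (hi : ¬ p ^ i ∣ N + 1) : N % p ^ i < p ^ i - p ^ j := by
  have hpi := pow_pos hp i
  -- `(N + 1) % p ^ i` is a nonzero multiple of `p ^ j` below `p ^ i`, and equals `N % p ^ i + 1`.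
  have hr : p ^ j ∣ (N + 1) % p ^ i := (Nat.dvd_mod_iff (pow_dvd_pow p hji)).2 hj
  have hr0 : (N + 1) % p ^ i ≠ 0 := fun h => hi (Nat.dvd_of_mod_eq_zero h)
  have hle := add_le_of_dvd_of_lt hr (pow_dvd_pow p hji) (Nat.mod_lt _ hpi)
  have hsucc := Nat.add_mod_add_ite N 1 (p ^ i)
  have hN := Nat.mod_lt N hpi
  have h1 : 1 % p ^ i = 1 := Nat.mod_eq_of_lt (lt_of_le_of_ne hpi fun h => hi (h ▸ one_dvd _))
  have hj0 := pow_pos hp j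
  split_ifs at hsucc <;> omega

lemma carries_subset_Ioc (p N a : ℕ) :
    carries p N a ⊆ Ioc (padicValNat p (N + 1)) (log p N) := by
  intro i hi
  simp only [carries, mem_filter, mem_Ico] at hi
  obtain ⟨⟨-, hi⟩, hcarry⟩ := hi
  refine mem_Ioc.2 ⟨?_, by omega⟩
  by_contra! hle
  exact not_dvd_add_one_of_mod_lt_mod hcarry ((pow_dvd_pow p hle).trans pow_padicValNat_dvd)

lemma carries_pow_log_sub_pow {p N : ℕ} (hp : 1 < p) :
    carries p N (p ^ log p N - p ^ padicValNat p (N + 1)) =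
      Ioc (padicValNat p (N + 1)) (log p N) := by
  refine (carries_subset_Ioc _ _ _).antisymm fun i hi => ?_
  obtain ⟨hji, his⟩ := mem_Ioc.1 hi
  simp only [carries, mem_filter, mem_Ico]
  refine ⟨⟨by omega, by omega⟩, ?_⟩
  rw [pow_sub_pow_mod_pow (zero_lt_one.trans hp) hji.le his]
  refine mod_pow_lt_pow_sub_pow (zero_lt_one.trans hp) hji.le pow_padicValNat_dvd ?_
  rw [padicValNat_dvd_iff_le_of_ne_one hp.ne' N.succ_ne_zero]
  exact hji.not_ge

lemma pow_log_sub_pow_le {p : ℕ} (j N : ℕ) (hp : 0 < p) : p ^ log p N - p ^ j ≤ N := by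
  rcases N.eq_zero_or_pos with rfl | hN
  · rw [Nat.log_zero_right, pow_zero, Nat.sub_eq_zero_of_le (Nat.one_le_pow j p hp)]
  · exact (Nat.sub_le _ _).trans (Nat.pow_log_le_self p hN.ne')

lemma padicValNat_choose_le_log_sub {p N a : ℕ} [Fact p.Prime] (ha : a ≤ N) :
    padicValNat p (N.choose a) ≤ log p N - padicValNat p (N + 1) := by
  rw [padicValNat_choose_eq_card_carries ha, ← Nat.card_Ioc]
  exact card_le_card (carries_subset_Ioc p N a)

lemma padicValNat_choose_pow_log_sub_pow {p : ℕ} [hp : Fact p.Prime] (N : ℕ) :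
    padicValNat p (N.choose (p ^ log p N - p ^ padicValNat p (N + 1))) =
      log p N - padicValNat p (N + 1) := by
  rw [padicValNat_choose_eq_card_carries (pow_log_sub_pow_le _ N hp.out.pos),
    carries_pow_log_sub_pow hp.out.one_lt, Nat.card_Ioc]

lemma two_mul_pow_log_sub_pow_ne {p N : ℕ} (hp : 0 < p) (h : ∀ t, N + 1 ≠ 2 * p ^ t - 1) :
    2 * (p ^ log p N - p ^ padicValNat p (N + 1)) ≠ N := by
  set s := log p N
  set j := padicValNat p (N + 1)
  intro he
  have hdvd : p ^ j ∣ p ^ s - p ^ j := by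
    rcases le_total j s with hjs | hsj
    · exact Nat.dvd_sub (pow_dvd_pow p hjs) dvd_rfl
    · rw [Nat.sub_eq_zero_of_le (Nat.pow_le_pow_right hp hsj)]
      exact dvd_zero _
  have hN : p ^ j ∣ N := he ▸ hdvd.mul_left 2
  have hj : p ^ j = 1 := Nat.dvd_one.1 ((Nat.dvd_add_right hN).1 pow_padicValNat_dvd)
  have := Nat.one_le_pow s p hp
  exact h s (by omega)

lemma exists_two_mul_lt_padicValNat_choose_eq {p N : ℕ} [hp : Fact p.Prime]
    (h : ∀ t, N + 1 ≠ 2 * p ^ t - 1) :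
    ∃ a ≤ N, 2 * a < N ∧ padicValNat p (N.choose a) = log p N - padicValNat p (N + 1) := by
  have ha := pow_log_sub_pow_le (padicValNat p (N + 1)) N hp.out.pos
  have hval := padicValNat_choose_pow_log_sub_pow (p := p) N
  set a := p ^ log p N - p ^ padicValNat p (N + 1)
  rcases lt_or_gt_of_ne (two_mul_pow_log_sub_pow_ne hp.out.pos h) with hlt | hgt
  · exact ⟨a, ha, hlt, hval⟩
  · exact ⟨N - a, Nat.sub_le _ _, by omega, by rwa [Nat.choose_symm ha]⟩

lemma padicValNat_two_mul_pow_sub_one {p : ℕ} (hp : 1 < p) (t : ℕ) :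
    padicValNat p (2 * p ^ t - 1) = 0 := by
  rcases t.eq_zero_or_pos with rfl | ht
  · simp
  refine padicValNat.eq_zero_of_not_dvd fun hdvd => hp.ne' (Nat.dvd_one.1 ?_)
  have hpow : p ∣ 2 * p ^ t := (dvd_pow_self p ht.ne').mul_left 2
  have := Nat.one_le_pow t p (zero_lt_one.trans hp)
  simpa [Nat.sub_sub_self (by omega : 1 ≤ 2 * p ^ t)] using Nat.dvd_sub hpow hdvd

lemma log_two_mul_pow_sub_two {p : ℕ} (hp : 1 < p) (t : ℕ) : log p (2 * p ^ t - 2) = t := by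
  rcases t.eq_zero_or_pos with rfl | ht
  · simp
  have h2 : 2 ≤ p ^ t := hp.trans_le (Nat.le_self_pow ht.ne' p)
  have hmul : p ^ t * 2 ≤ p ^ t * p := Nat.mul_le_mul_left _ hp
  rw [Nat.log_eq_iff (Or.inl ht.ne'), pow_succ]
  omega

lemma padicValNat_choose_two_mul_pow_sub_two_eq_iff {p t a : ℕ} [hp : Fact p.Prime]
    (ha : a ≤ 2 * p ^ t - 2) :
    padicValNat p ((2 * p ^ t - 2).choose a) = t ↔ a = p ^ t - 1 := by
  set N := 2 * p ^ t - 2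
  have hpt := Nat.one_le_pow t p hp.out.pos
  have hlog : log p N = t := log_two_mul_pow_sub_two hp.out.one_lt t
  have hval : padicValNat p (N + 1) = 0 := by
    rw [show N + 1 = 2 * p ^ t - 1 by omega, padicValNat_two_mul_pow_sub_one hp.out.one_lt]
  constructor
  · intro h
    rcases t.eq_zero_or_pos with rfl | ht
    · simpa [N] using ha
    rw [padicValNat_choose_eq_card_carries ha] at h
    have hall : carries p N a = Ioc 0 t :=
      eq_of_subset_of_card_le (hlog ▸ hval ▸ carries_subset_Ioc p N a) (by simp [h])
    have hcarry : N % p ^ t < a % p ^ t := by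
      have hmem : t ∈ carries p N a := hall ▸ mem_Ioc.2 ⟨ht, le_rfl⟩
      exact (mem_filter.1 hmem).2
    have hN : N % p ^ t = p ^ t - 2 := by
      have h2 : 2 ≤ p ^ t := hp.out.two_le.trans (Nat.le_self_pow ht.ne' p)
      rw [show N = (p ^ t - 2) + p ^ t * 1 by omega, Nat.add_mul_mod_self_left,
        Nat.mod_eq_of_lt (by omega)]
    have hdiv : a / p ^ t < 2 := (Nat.div_lt_iff_lt_mul (by omega)).2 (by omega)
    have := Nat.mod_add_div a (p ^ t)
    have := Nat.mod_lt a (by omega : 0 < p ^ t)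
    interval_cases a / p ^ t <;> omega
  · rintro rfl
    simpa [hlog, hval] using padicValNat_choose_pow_log_sub_pow (p := p) N

lemma G3_succ {N a : ℕ} (ha : a ≤ N) :
    G3 (N + 1) a = padicValNat 3 (N + 1) + padicValNat 3 (N.choose a) := by
  have : Fact (Nat.Prime 3) := ⟨Nat.prime_three⟩
  have hc := (Nat.choose_pos ha).ne'
  have hc' := (Nat.choose_pos (ha.trans N.le_succ)).ne'
  rw [G3, F3, ← padicValNat.mul hc' (by omega), ← Nat.choose_mul_succ_eq, mul_comm,
    padicValNat.mul N.succ_ne_zero hc]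

lemma forall_G3_succ_le_iff {N a : ℕ} (ha : a ≤ N) :
    (∀ a' ≤ N, G3 (N + 1) a' ≤ G3 (N + 1) a) ↔
      padicValNat 3 (N.choose a) = log 3 N - padicValNat 3 (N + 1) := by
  have : Fact (Nat.Prime 3) := ⟨Nat.prime_three⟩
  constructor
  · intro h
    have hmax := h _ (pow_log_sub_pow_le (padicValNat 3 (N + 1)) N three_pos)
    rw [G3_succ (pow_log_sub_pow_le _ N three_pos), G3_succ ha,
      padicValNat_choose_pow_log_sub_pow] at hmax
    exact le_antisymm (padicValNat_choose_le_log_sub ha) (by omega)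
  · intro h a' ha'
    rw [G3_succ ha', G3_succ ha, h]
    exact Nat.add_le_add_left (padicValNat_choose_le_log_sub ha') _

theorem stmt17_general (B : ℕ) (hB : 1 ≤ B) :
    ((∀ t : ℕ, B ≠ 2 * 3 ^ t - 1) →
      ∃ a : ℕ, a ≤ B - 1 ∧ 2 * a < B - 1 ∧ ∀ a' : ℕ, a' ≤ B - 1 → G3 B a' ≤ G3 B a) ∧
    ((∃ t : ℕ, B = 2 * 3 ^ t - 1) →
      (∀ a' : ℕ, a' ≤ B - 1 → G3 B a' ≤ G3 B ((B-1)/2)) ∧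
      (∀ a : ℕ, a ≤ B - 1 → (∀ a' : ℕ, a' ≤ B - 1 → G3 B a' ≤ G3 B a) →
        a = (B-1)/2)) := by
  have : Fact (Nat.Prime 3) := ⟨Nat.prime_three⟩
  obtain ⟨N, rfl⟩ : ∃ N, B = N + 1 := ⟨B - 1, by omega⟩
  simp only [Nat.add_sub_cancel]
  refine ⟨fun hne => ?_, fun ⟨t, ht⟩ => ?_⟩
  · obtain ⟨a, ha, h2a, hmax⟩ := exists_two_mul_lt_padicValNat_choose_eq hne
    exact ⟨a, ha, h2a, (forall_G3_succ_le_iff ha).2 hmax⟩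
  · have := Nat.one_le_pow t 3 three_pos
    obtain rfl : N = 2 * 3 ^ t - 2 := by omega
    have hmax : ∀ a ≤ 2 * 3 ^ t - 2,
        (∀ a' ≤ 2 * 3 ^ t - 2, G3 (2 * 3 ^ t - 2 + 1) a' ≤ G3 (2 * 3 ^ t - 2 + 1) a) ↔
          a = 3 ^ t - 1 := fun a ha => by
      rw [forall_G3_succ_le_iff ha, log_two_mul_pow_sub_two (by norm_num), ht,
        padicValNat_two_mul_pow_sub_one (by norm_num), Nat.sub_zero,
        padicValNat_choose_two_mul_pow_sub_two_eq_iff ha]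
    rw [show (2 * 3 ^ t - 2) / 2 = 3 ^ t - 1 by omega]
    exact ⟨(hmax _ (by omega)).2 rfl, fun a ha h => (hmax a ha).1 h⟩

theorem stmt17 (B : ℕ) (hB : 1 ≤ B) (hodd : Odd B) :
    ((∀ t : ℕ, B ≠ 2 * 3 ^ t - 1) →
      ∃ a : ℕ, a ≤ B - 1 ∧ 2 * a < B - 1 ∧ ∀ a' : ℕ, a' ≤ B - 1 → G3 B a' ≤ G3 B a) ∧
    ((∃ t : ℕ, B = 2 * 3 ^ t - 1) →
      (∀ a' : ℕ, a' ≤ B - 1 → G3 B a' ≤ G3 B ((B-1)/2)) ∧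
      (∀ a : ℕ, a ≤ B - 1 → (∀ a' : ℕ, a' ≤ B - 1 → G3 B a' ≤ G3 B a) →
        a = (B-1)/2)) :=
  stmt17_general B hB
end

section
/- Let A ≥ 2 be an even integer. (i) If A ≠ 2·3^t − 2 for every integer t ≥ 1, then F_A attains its maximum over {0,…,A} at some index a with 2a < A. (ii) If A = 2·3^t − 2 for some integer t ≥ 1, then F_A has a unique maximizer on {0,…,A}, namely a = A/2. -/
/-!
By Kummer's theorem `v_p(binom(n, k))` counts the positions `1 ≤ i ≤ log_p n` at which adding
`k` and `n - k` in base `p` carries, i.e. at which `n mod p^i < k mod p^i`. Since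
`k mod p^i ≤ p^i - 1 = (p^L - 1) mod p^i` for `L = log_p n`, every carry position of `k` is one of
`p^L - 1`, so `p^L - 1` and its mirror `n - (p^L - 1)` maximise `v_p(binom(n, ·))`; one of them lies
strictly below `n / 2` unless `n = 2 p^L - 2`. For that `n`, `n ≡ -2 (mod p^i)` for all `i ≤ L`, so
the maximum is `L`, and carrying at position `L` forces `k ≡ -1 (mod p^L)`, hence `k = p^L - 1`.
-/

open Finset

namespace Nat

def carries (p n k : ℕ) : Finset ℕ :=
  {i ∈ Ico 1 (log p n + 1) | n % p ^ i < k % p ^ i}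

theorem le_mod_add_mod_sub_iff {m n k : ℕ} (hm : 0 < m) (hkn : k ≤ n) :
    m ≤ k % m + (n - k) % m ↔ n % m < k % m := by
  have h := add_mod_add_ite k (n - k) m
  rw [Nat.add_sub_cancel' hkn] at h
  have := mod_lt k hm
  have := mod_lt (n - k) hm
  split_ifs at h <;> omega

theorem padicValNat_choose_eq_card_carries {p n k : ℕ} [hp : Fact p.Prime] (hkn : k ≤ n) :
    padicValNat p (n.choose k) = #(carries p n k) := by
  rw [padicValNat_choose hkn (lt_succ_self _), carries]
  exact congrArg card <| filter_congr fun i _ => le_mod_add_mod_sub_iff (pow_pos hp.out.pos i) hkn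

theorem sub_mod_of_dvd {m N r : ℕ} (hmN : m ∣ N) (hN : 0 < N) (hrm : r ≤ m) (hr : 0 < r) :
    (N - r) % m = m - r := by
  obtain ⟨c, rfl⟩ := hmN
  obtain ⟨c, rfl⟩ : ∃ d, c = d + 1 := ⟨c - 1, by rcases c with _ | c <;> simp_all⟩
  rw [show m * (c + 1) - r = m - r + m * c by rw [mul_add_one]; omega, add_mul_mod_self_left,
    mod_eq_of_lt (by omega)]

theorem pow_log_sub_one_le (p n : ℕ) : p ^ log p n - 1 ≤ n := by
  rcases n.eq_zero_or_pos with rfl | hn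
  · simp
  · have := pow_log_le_self p hn.ne'
    omega

theorem carries_subset_carries_pow_log_sub_one {p : ℕ} (hp : 0 < p) (n k : ℕ) :
    carries p n k ⊆ carries p n (p ^ log p n - 1) := by
  intro i hi
  simp only [carries, mem_filter, mem_Ico] at hi ⊢
  obtain ⟨⟨hi1, hiL⟩, hcarry⟩ := hi
  refine ⟨⟨hi1, hiL⟩, ?_⟩
  have hpi : 0 < p ^ i := pow_pos hp i
  rw [sub_mod_of_dvd (pow_dvd_pow p (by omega)) (pow_pos hp _) hpi zero_lt_one]
  have := mod_lt k hpi
  omega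

theorem padicValNat_choose_le_pow_log_sub_one {p n k : ℕ} [hp : Fact p.Prime] (hkn : k ≤ n) :
    padicValNat p (n.choose k) ≤ padicValNat p (n.choose (p ^ log p n - 1)) := by
  rw [padicValNat_choose_eq_card_carries hkn,
    padicValNat_choose_eq_card_carries (pow_log_sub_one_le p n)]
  exact card_le_card (carries_subset_carries_pow_log_sub_one hp.out.pos n k)

section TwoMulPowSubTwo

variable {p t : ℕ}

theorem log_two_mul_pow_sub_two (hp : 1 < p) (ht : 1 ≤ t) : log p (2 * p ^ t - 2) = t := by
  have h2 : 2 ≤ p ^ t := (le_self_pow₀ hp.le (by omega)).trans' hp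
  have hsucc : 2 * p ^ t ≤ p ^ (t + 1) := by
    rw [pow_succ, mul_comm]
    exact Nat.mul_le_mul_left _ hp
  exact log_eq_of_pow_le_of_lt_pow (by omega) (by omega)

theorem two_mul_pow_sub_two_mod_pow (hp : 1 < p) {i : ℕ} (hi : 1 ≤ i) (hit : i ≤ t) :
    (2 * p ^ t - 2) % p ^ i = p ^ i - 2 := by
  have h2 : 2 ≤ p ^ i := (le_self_pow₀ hp.le (by omega)).trans' hp
  exact sub_mod_of_dvd ((pow_dvd_pow p hit).mul_left 2) (by positivity) h2 two_pos

theorem carries_two_mul_pow_sub_two (hp : 1 < p) (ht : 1 ≤ t) :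
    carries p (2 * p ^ t - 2) (p ^ t - 1) = Ico 1 (t + 1) := by
  rw [carries, log_two_mul_pow_sub_two hp ht]
  refine filter_true_of_mem fun i hi => ?_
  obtain ⟨hi1, hit⟩ := mem_Ico.1 hi
  have hpi : 2 ≤ p ^ i := (le_self_pow₀ hp.le (by omega)).trans' hp
  rw [two_mul_pow_sub_two_mod_pow hp hi1 (by omega),
    sub_mod_of_dvd (pow_dvd_pow p (by omega)) (pow_pos (by omega) t) (by omega) zero_lt_one]
  omega

variable [hp : Fact p.Prime]

theorem padicValNat_choose_two_mul_pow_sub_two (ht : 1 ≤ t) :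
    padicValNat p ((2 * p ^ t - 2).choose (p ^ t - 1)) = t := by
  have := pow_pos hp.out.pos t
  rw [padicValNat_choose_eq_card_carries (by omega),
    carries_two_mul_pow_sub_two hp.out.one_lt ht, card_Ico, add_tsub_cancel_right]

theorem eq_pow_sub_one_of_le_padicValNat_choose (ht : 1 ≤ t) {a : ℕ} (ha : a ≤ 2 * p ^ t - 2)
    (h : t ≤ padicValNat p ((2 * p ^ t - 2).choose a)) : a = p ^ t - 1 := by
  have hp1 := hp.out.one_lt
  rw [padicValNat_choose_eq_card_carries ha] at h
  have hfull : carries p (2 * p ^ t - 2) a = Ico 1 (t + 1) := by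
    refine eq_of_subset_of_card_le ?_ (by simpa using h)
    rw [carries, log_two_mul_pow_sub_two hp1 ht]
    exact filter_subset _ _
  have hcarry : t ∈ carries p (2 * p ^ t - 2) a := hfull ▸ mem_Ico.2 ⟨ht, lt_add_one t⟩
  simp only [carries, mem_filter] at hcarry
  rw [two_mul_pow_sub_two_mod_pow hp1 ht le_rfl] at hcarry
  have hpt : 0 < p ^ t := pow_pos hp.out.pos t
  have := mod_lt a hpt
  have hq : a / p ^ t < 2 := (Nat.div_lt_iff_lt_mul hpt).2 (by omega)
  have hdiv := div_add_mod a (p ^ t)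
  interval_cases a / p ^ t <;> omega

end TwoMulPowSubTwo

end Nat

theorem stmt18_general (A : ℕ) (hA : 2 ≤ A) :
    ((∀ t : ℕ, 1 ≤ t → A ≠ 2 * 3 ^ t - 2) →
      ∃ a : ℕ, a ≤ A ∧ 2 * a < A ∧ ∀ a' : ℕ, a' ≤ A → F3 A a' ≤ F3 A a) ∧
    ((∃ t : ℕ, 1 ≤ t ∧ A = 2 * 3 ^ t - 2) →
      (∀ a' : ℕ, a' ≤ A → F3 A a' ≤ F3 A (A/2)) ∧
      (∀ a : ℕ, a ≤ A → (∀ a' : ℕ, a' ≤ A → F3 A a' ≤ F3 A a) → a = A/2)) := by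
  have hmax (a' : ℕ) (ha' : a' ≤ A) : F3 A a' ≤ F3 A (3 ^ Nat.log 3 A - 1) :=
    Nat.padicValNat_choose_le_pow_log_sub_one ha'
  have hle := Nat.pow_log_sub_one_le 3 A
  refine ⟨fun hne => ?_, ?_⟩
  · rcases lt_trichotomy (2 * (3 ^ Nat.log 3 A - 1)) A with hlt | heq | hgt
    · exact ⟨_, hle, hlt, hmax⟩
    · have hlog : 1 ≤ Nat.log 3 A := Nat.one_le_iff_ne_zero.2 fun h0 => by simp [h0] at heq; omega
      exact absurd (by omega) (hne _ hlog)
    · refine ⟨A - (3 ^ Nat.log 3 A - 1), by omega, by omega, fun a' ha' => ?_⟩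
      rw [F3, F3, Nat.choose_symm hle]
      exact hmax a' ha'
  · rintro ⟨t, ht, rfl⟩
    have hhalf : (2 * 3 ^ t - 2) / 2 = 3 ^ t - 1 := by omega
    rw [Nat.log_two_mul_pow_sub_two (by norm_num) ht] at hmax
    rw [hhalf]
    refine ⟨hmax, fun a ha hamax => Nat.eq_pow_sub_one_of_le_padicValNat_choose ht ha ?_⟩
    exact (Nat.padicValNat_choose_two_mul_pow_sub_two ht).symm.le.trans (hamax _ (by omega))

theorem stmt18 (A : ℕ) (hA : 2 ≤ A) (heven : Even A) :
    ((∀ t : ℕ, 1 ≤ t → A ≠ 2 * 3 ^ t - 2) →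
      ∃ a : ℕ, a ≤ A ∧ 2 * a < A ∧ ∀ a' : ℕ, a' ≤ A → F3 A a' ≤ F3 A a) ∧
    ((∃ t : ℕ, 1 ≤ t ∧ A = 2 * 3 ^ t - 2) →
      (∀ a' : ℕ, a' ≤ A → F3 A a' ≤ F3 A (A/2)) ∧
      (∀ a : ℕ, a ≤ A → (∀ a' : ℕ, a' ≤ A → F3 A a' ≤ F3 A a) → a = A/2)) :=
  stmt18_general A hA
end
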